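/- Let m ≥ 1, let D be any m×m complex matrix, and let v ∈ ℂ^m be a unit vector. Let v* denote the entrywise complex conjugate of v and let D_{v*} = (1/m)·(v* (v*)†) ⊗ E00 + (diag(|v₀|², …, |v_{m−1}|²) − (1/m)·v* (v*)†) ⊗ E11 be the associated 2m×2m matrix, indexed by (a, b) ∈ {0,…,m−1} × {0,1}. Let w ∈ ℂ^(m·2m) be the 0/1 vector w = Σ_{a=0}^{m−1} e_a ⊗ e_{(a,0)}. Then ⟨w, (D ⊗ D_{v*}) w⟩ = (1/m)·⟨v, D v⟩. In particular, if ⟨v, D v⟩ < 0 then D ⊗ D_{v*} has a negative quadratic form at the 0/1 vector w. -/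
import Mathlib


open Matrix BigOperators ComplexOrder Kronecker

/-- The rank-one projector `E00 = e₀e₀†` on `ℂ²`. -/
def E00 : Matrix (Fin 2) (Fin 2) ℂ := !![1, 0; 0, 0]

/-- The rank-one projector `E11 = e₁e₁†` on `ℂ²`. -/
def E11 : Matrix (Fin 2) (Fin 2) ℂ := !![0, 0; 0, 1]

/-- The `2m × 2m` matrix
`D_u = (1/m)·(u u†) ⊗ E00 + (diag(|u₀|²,…,|u_{m−1}|²) − (1/m)·u u†) ⊗ E11`,
indexed by `Fin m × Fin 2`. -/
noncomputable def Dv {m : ℕ} (u : Fin m → ℂ) :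
    Matrix (Fin m × Fin 2) (Fin m × Fin 2) ℂ :=
  (1 / (m : ℂ)) • ((vecMulVec u (star u)) ⊗ₖ E00) +
    ((Matrix.diagonal fun a => ((Complex.normSq (u a) : ℝ) : ℂ)) -
        (1 / (m : ℂ)) • vecMulVec u (star u)) ⊗ₖ E11

/-- The 0/1 vector `w = Σ_{a} e_a ⊗ e_{(a,0)}` in `ℂ^(m·2m)`. -/
def wvec (m : ℕ) : (Fin m × (Fin m × Fin 2)) → ℂ :=
  fun p => if p.2.1 = p.1 ∧ p.2.2 = 0 then 1 else 0

/-- For any `m × m` complex matrix `D` and unit vector `v ∈ ℂ^m`, the quadratic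
form of `D ⊗ D_{v*}` (with `v*` the entrywise conjugate of `v`) at the 0/1
vector `w = Σ_a e_a ⊗ e_{(a,0)}` equals `(1/m)·⟨v, D v⟩`. In particular, if
`⟨v, D v⟩ < 0` then `D ⊗ D_{v*}` has a negative quadratic form at `w`. -/
theorem quadratic_form_tensor_Dv_star (m : ℕ) (hm : 1 ≤ m)
    (D : Matrix (Fin m) (Fin m) ℂ) (v : Fin m → ℂ) (hv : star v ⬝ᵥ v = 1) :
    (∀ i, wvec m i = 0 ∨ wvec m i = 1) ∧
    star (wvec m) ⬝ᵥ (D ⊗ₖ Dv (star v)).mulVec (wvec m) =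
      (1 / (m : ℂ)) * (star v ⬝ᵥ D.mulVec v) ∧
    (star v ⬝ᵥ D.mulVec v < 0 →
      star (wvec m) ⬝ᵥ (D ⊗ₖ Dv (star v)).mulVec (wvec m) < 0) := by
  have key : star (wvec m) ⬝ᵥ (D ⊗ₖ Dv (star v)).mulVec (wvec m) =
      (1 / (m : ℂ)) * (star v ⬝ᵥ D.mulVec v) := by
    simp only [dotProduct, mulVec, Fintype.sum_prod_type, wvec, Pi.star_apply, apply_ite star,
      star_one, star_zero, ite_and, mul_ite, ite_mul, mul_one, mul_zero, one_mul, zero_mul,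
      Finset.sum_ite_eq, Finset.sum_ite_eq', Finset.mem_univ, if_true,
      Finset.sum_ite_irrel, Finset.sum_const_zero]
    simp only [kroneckerMap_apply, Dv, Matrix.add_apply, Matrix.smul_apply, Matrix.sub_apply,
      E00, E11, vecMulVec_apply, Pi.star_apply, star_star, Matrix.diagonal_apply,
      smul_eq_mul, Fin.sum_univ_two, Matrix.cons_val', Matrix.cons_val_zero, Matrix.cons_val_one,
      Matrix.head_cons, Matrix.empty_val', Matrix.cons_val_fin_one, Matrix.head_fin_const,
      mul_zero, add_zero, zero_add, mul_one, sub_zero, one_ne_zero, if_false]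
    rw [Finset.mul_sum]
    refine Finset.sum_congr rfl fun a _ => ?_
    rw [Finset.mul_sum, Finset.mul_sum]
    refine Finset.sum_congr rfl fun a' _ => ?_
    norm_num [Matrix.cons_val_zero]
    all_goals ring
  refine ⟨fun i => ?_, key, fun hneg => ?_⟩
  · unfold wvec; split <;> simp
  · rw [key]
    have hpos : (0 : ℂ) < 1 / (m : ℂ) := by
      have : (0:ℝ) < 1 / (m : ℝ) := by positivity
      have := Complex.zero_lt_real.mpr this
      simpa using this
    exact mul_neg_of_pos_of_neg hpos hneg
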